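/- arXiv:1103.2300 — 10 statements merged into one kernel-verified Lean document; each statement's English description precedes it below -/
import Mathlib

section
/- Let M be a smooth finite-dimensional manifold, x ∈ M, and s : M → M a smooth diffeomorphism with s(x) = x whose differential at x equals −id on T_xM. Then for every smooth vector field Y on M the vector field Y + s_*Y vanishes at x, and consequently for all smooth vector fields X, Y and every smooth function f on M one has (1/2)[fX, Y + s_*Y]_x = f(x)·(1/2)[X, Y + s_*Y]_x; that is, the operator (∇_X Y)_x := (1/2)[X, Y + s_*Y]_x is C^∞(M)-linear in its first argument. -/
/-! Because `s` fixes `x` with `ds_x = -id`, the value of `s_*Y` at `x` is `ds_x(Y_x) = -Y_x`,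
so `Z := Y + s_*Y` vanishes at `x`. Since `[fX, Z] = f[X, Z] - (Z f) X` for derivations of a
commutative algebra, the correction term `(Z f) X` vanishes at `x`. -/

open scoped Manifold
local notation "∞" => (⊤ : ℕ∞)

/-- The pushforward of a vector field (viewed, as is standard, as a derivation of the
algebra of smooth functions) along a diffeomorphism `s` with smooth inverse `sinv`:
`(s_*Y) f = (Y (f ∘ s)) ∘ s⁻¹`. -/
noncomputable def pushforwardVF
    {E : Type*} [NormedAddCommGroup E] [NormedSpace ℝ E]
    {H : Type*} [TopologicalSpace H] {I : ModelWithCorners ℝ E H}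
    {M : Type*} [TopologicalSpace M] [ChartedSpace H M]
    (s sinv : C^∞⟮I, M; I, M⟯) (hs : ∀ z : M, s (sinv z) = z)
    (Y : Derivation ℝ C^∞⟮I, M; ℝ⟯ C^∞⟮I, M; ℝ⟯) :
    Derivation ℝ C^∞⟮I, M; ℝ⟯ C^∞⟮I, M; ℝ⟯ :=
  Derivation.mk'
    { toFun := fun f => (Y (f.comp s)).comp sinv
      map_add' := fun f g => by
        show (Y ((f + g).comp s)).comp sinv
            = (Y (f.comp s)).comp sinv + (Y (g.comp s)).comp sinv
        rw [ContMDiffMap.add_comp, map_add, ContMDiffMap.add_comp]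
      map_smul' := fun c f => by
        show (Y ((c • f).comp s)).comp sinv = c • (Y (f.comp s)).comp sinv
        rw [ContMDiffMap.smul_comp, Derivation.map_smul, ContMDiffMap.smul_comp] }
    (fun f g => by
      show (Y ((f * g).comp s)).comp sinv
          = f • (Y (g.comp s)).comp sinv + g • (Y (f.comp s)).comp sinv
      rw [ContMDiffMap.mul_comp, Derivation.leibniz]
      ext z
      simp [hs z])

namespace Derivation

variable {R A : Type*} [CommRing R] [CommRing A] [Algebra R A]

theorem commutator_smul_left (a : A) (D₁ D₂ : Derivation R A A) :
    ⁅a • D₁, D₂⁆ = a • ⁅D₁, D₂⁆ - D₂ a • D₁ := by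
  ext b
  simp only [commutator_apply, smul_apply, sub_apply, smul_eq_mul, leibniz, mul_sub]
  ring

end Derivation

section

variable {𝕜 : Type*} [NontriviallyNormedField 𝕜]
    {E : Type*} [NormedAddCommGroup E] [NormedSpace 𝕜 E]
    {H : Type*} [TopologicalSpace H] {I : ModelWithCorners 𝕜 E H}
    {M : Type*} [TopologicalSpace M] [ChartedSpace H M]

theorem Derivation.evalAt_commutator_smul_left_of_apply_eq_zero {x : M}
    {Z : Derivation 𝕜 C^∞⟮I, M; 𝕜⟯ C^∞⟮I, M; 𝕜⟯} {f : C^∞⟮I, M; 𝕜⟯} (hZf : Z f x = 0)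
    (X : Derivation 𝕜 C^∞⟮I, M; 𝕜⟯ C^∞⟮I, M; 𝕜⟯) :
    evalAt x ⁅f • X, Z⁆ = f x • evalAt x ⁅X, Z⁆ := by
  ext (g : C^∞⟮I, M; 𝕜⟯)
  rw [commutator_smul_left]
  change ((f • ⁅X, Z⁆ - Z f • X) g) x = f x * (⁅X, Z⁆ g) x
  simp [hZf]

end

section

variable {E : Type*} [NormedAddCommGroup E] [NormedSpace ℝ E]
    {H : Type*} [TopologicalSpace H] {I : ModelWithCorners ℝ E H}
    {M : Type*} [TopologicalSpace M] [ChartedSpace H M]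
    {s sinv : C^∞⟮I, M; I, M⟯} {x : M}

theorem evalAt_pushforwardVF (hs : ∀ z : M, s (sinv z) = z) (hsx : s x = x)
    (hsinvx : sinv x = x) (Y : Derivation ℝ C^∞⟮I, M; ℝ⟯ C^∞⟮I, M; ℝ⟯) :
    Derivation.evalAt x (pushforwardVF s sinv hs Y) = 𝒅ₕ hsx (Derivation.evalAt x Y) := by
  ext (g : C^∞⟮I, M; ℝ⟯)
  change Y (g.comp s) (sinv x) = Y (g.comp s) x
  rw [hsinvx]

theorem evalAt_add_pushforwardVF_eq_zero (hs : ∀ z : M, s (sinv z) = z) (hsx : s x = x)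
    (hsinvx : sinv x = x) (hds : ∀ v : PointDerivation I x, 𝒅ₕ hsx v = -v)
    (Y : Derivation ℝ C^∞⟮I, M; ℝ⟯ C^∞⟮I, M; ℝ⟯) :
    Derivation.evalAt x (Y + pushforwardVF s sinv hs Y) = 0 := by
  rw [map_add, evalAt_pushforwardVF hs hsx hsinvx, hds, add_neg_cancel]

end

theorem statement0_general
    {E : Type*} [NormedAddCommGroup E] [NormedSpace ℝ E]
    {H : Type*} [TopologicalSpace H] {I : ModelWithCorners ℝ E H}
    {M : Type*} [TopologicalSpace M] [ChartedSpace H M]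
    (x : M) (s sinv : C^∞⟮I, M; I, M⟯)
    (hinv : ∀ z : M, s (sinv z) = z) (hinv' : ∀ z : M, sinv (s z) = z)
    (hsx : s x = x)
    (hds : ∀ v : PointDerivation I x, 𝒅ₕ hsx v = -v) :
    (∀ Y : Derivation ℝ C^∞⟮I, M; ℝ⟯ C^∞⟮I, M; ℝ⟯,
        Derivation.evalAt x (Y + pushforwardVF s sinv hinv Y) = 0)
    ∧ ∀ (X Y : Derivation ℝ C^∞⟮I, M; ℝ⟯ C^∞⟮I, M; ℝ⟯) (f : C^∞⟮I, M; ℝ⟯),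
        (1/2 : ℝ) • Derivation.evalAt x ⁅f • X, Y + pushforwardVF s sinv hinv Y⁆
          = f x • ((1/2 : ℝ) •
              Derivation.evalAt x ⁅X, Y + pushforwardVF s sinv hinv Y⁆) := by
  have hsinvx : sinv x = x := by simpa only [hsx] using hinv' x
  have hvanish := evalAt_add_pushforwardVF_eq_zero hinv hsx hsinvx hds
  refine ⟨hvanish, fun X Y f => ?_⟩
  have hZf : (Y + pushforwardVF s sinv hinv Y) f x = 0 :=
    DFunLike.congr_fun (hvanish Y) f
  rw [Derivation.evalAt_commutator_smul_left_of_apply_eq_zero hZf, smul_comm]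

/-- (C^∞-linearity part of Proposition 1.3.) Let `M` be a smooth
finite-dimensional manifold, `x ∈ M`, and `s` a smooth diffeomorphism of `M` (with
smooth inverse `sinv`) such that `s x = x` and whose differential at `x` is `-id`
on `T_xM`. Then for every smooth vector field `Y` the vector field `Y + s_*Y`
vanishes at `x`, and consequently for all vector fields `X, Y` and every smooth
function `f`, `(1/2)[fX, Y + s_*Y]_x = f(x)·(1/2)[X, Y + s_*Y]_x`. -/
theorem statement0
    {E : Type*} [NormedAddCommGroup E] [NormedSpace ℝ E] [FiniteDimensional ℝ E]
    {H : Type*} [TopologicalSpace H] {I : ModelWithCorners ℝ E H} [I.Boundaryless]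
    {M : Type*} [TopologicalSpace M] [ChartedSpace H M] [IsManifold I ∞ M]
    [T2Space M]
    (x : M) (s sinv : C^∞⟮I, M; I, M⟯)
    (hinv : ∀ z : M, s (sinv z) = z) (hinv' : ∀ z : M, sinv (s z) = z)
    (hsx : s x = x)
    (hds : ∀ v : PointDerivation I x, 𝒅ₕ hsx v = -v) :
    (∀ Y : Derivation ℝ C^∞⟮I, M; ℝ⟯ C^∞⟮I, M; ℝ⟯,
        Derivation.evalAt x (Y + pushforwardVF s sinv hinv Y) = 0)
    ∧ ∀ (X Y : Derivation ℝ C^∞⟮I, M; ℝ⟯ C^∞⟮I, M; ℝ⟯) (f : C^∞⟮I, M; ℝ⟯),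
        (1/2 : ℝ) • Derivation.evalAt x ⁅f • X, Y + pushforwardVF s sinv hinv Y⁆
          = f x • ((1/2 : ℝ) •
              Derivation.evalAt x ⁅X, Y + pushforwardVF s sinv hinv Y⁆) :=
  statement0_general x s sinv hinv hinv' hsx hds
end

section
/- Let M be a smooth finite-dimensional manifold, x ∈ M, and s : M → M a smooth diffeomorphism with s(x) = x whose differential at x equals −id on T_xM. Then for all smooth vector fields X, Y on M, (1/2)[X, Y + s_*Y]_x − (1/2)[Y, X + s_*X]_x = [X, Y]_x; that is, the connection defined by (∇_X Y)_x := (1/2)[X, Y + s_*Y]_x is torsion-free. -/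
/-! Because `s` fixes `x` and `d s_x = -id`, every derivation `Z` satisfies
`Z (g ∘ s) x = -Z g x`. Applied once to `Y` and once to `X` after composing `s_*Y g` with `s`,
this gives `⁅X, Y + s_*Y⁆ g x = X (Y g) x - X (Y (g ∘ s)) x`; antisymmetrising, the left-hand
side becomes `(⁅X, Y⁆ g x - ⁅X, Y⁆ (g ∘ s) x) / 2`, which is `⁅X, Y⁆ g x` by the same identity. -/

open scoped Manifold
local notation "∞" => (⊤ : ℕ∞)

section

variable {E : Type*} [NormedAddCommGroup E] [NormedSpace ℝ E]
  {H : Type*} [TopologicalSpace H] {I : ModelWithCorners ℝ E H}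
  {M : Type*} [TopologicalSpace M] [ChartedSpace H M]
  {s sinv : C^∞⟮I, M; I, M⟯} {x : M}

local notation "𝔛" => Derivation ℝ C^∞⟮I, M; ℝ⟯ C^∞⟮I, M; ℝ⟯

theorem Derivation.apply_comp_eq_neg_of_hfdifferential_eq_neg (hsx : s x = x)
    (hds : ∀ v : PointDerivation I x, 𝒅ₕ hsx v = -v) (Z : 𝔛) (g : C^∞⟮I, M; ℝ⟯) :
    Z (g.comp s) x = -Z g x :=
  DFunLike.congr_fun (hds (Derivation.evalAt x Z)) g

theorem pushforwardVF_apply_comp (hinv : ∀ z, s (sinv z) = z) (hinv' : ∀ z, sinv (s z) = z)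
    (Y : 𝔛) (g : C^∞⟮I, M; ℝ⟯) :
    (pushforwardVF s sinv hinv Y g).comp s = Y (g.comp s) := by
  ext z
  exact congrArg (Y (g.comp s)) (hinv' z)

theorem commutator_add_pushforwardVF_apply_of_hfdifferential_eq_neg (hinv : ∀ z, s (sinv z) = z)
    (hinv' : ∀ z, sinv (s z) = z) (hsx : s x = x)
    (hds : ∀ v : PointDerivation I x, 𝒅ₕ hsx v = -v) (X Y : 𝔛) (g : C^∞⟮I, M; ℝ⟯) :
    ⁅X, Y + pushforwardVF s sinv hinv Y⁆ g x = X (Y g) x - X (Y (g.comp s)) x := by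
  have hsinvx : sinv x = x := by simpa [hsx] using hinv' x
  have hpush : pushforwardVF s sinv hinv Y (X g) x = -Y (X g) x := by
    show Y ((X g).comp s) (sinv x) = _
    rw [hsinvx, Derivation.apply_comp_eq_neg_of_hfdifferential_eq_neg hsx hds]
  have hX_push : X (pushforwardVF s sinv hinv Y g) x = -X (Y (g.comp s)) x := by
    rw [← neg_eq_iff_eq_neg, ← Derivation.apply_comp_eq_neg_of_hfdifferential_eq_neg hsx hds,
      pushforwardVF_apply_comp hinv hinv']
  simp only [Derivation.commutator_apply, Derivation.add_apply, map_add,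
    ContMDiffMap.coe_add, ContMDiffMap.coe_sub, Pi.add_apply, Pi.sub_apply, hpush, hX_push]
  ring

end

theorem statement2_general
    {E : Type*} [NormedAddCommGroup E] [NormedSpace ℝ E]
    {H : Type*} [TopologicalSpace H] {I : ModelWithCorners ℝ E H}
    {M : Type*} [TopologicalSpace M] [ChartedSpace H M]
    (x : M) (s sinv : C^∞⟮I, M; I, M⟯)
    (hinv : ∀ z : M, s (sinv z) = z) (hinv' : ∀ z : M, sinv (s z) = z)
    (hsx : s x = x)
    (hds : ∀ v : PointDerivation I x, 𝒅ₕ hsx v = -v) :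
    ∀ X Y : Derivation ℝ C^∞⟮I, M; ℝ⟯ C^∞⟮I, M; ℝ⟯,
      (1/2 : ℝ) • Derivation.evalAt x ⁅X, Y + pushforwardVF s sinv hinv Y⁆
        - (1/2 : ℝ) • Derivation.evalAt x ⁅Y, X + pushforwardVF s sinv hinv X⁆
        = Derivation.evalAt x ⁅X, Y⁆ := by
  intro X Y
  refine Derivation.ext fun (g : C^∞⟮I, M; ℝ⟯) => ?_
  have hlie := Derivation.apply_comp_eq_neg_of_hfdifferential_eq_neg hsx hds ⁅X, Y⁆ g
  show (1/2 : ℝ) * ⁅X, Y + pushforwardVF s sinv hinv Y⁆ g x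
      - (1/2 : ℝ) * ⁅Y, X + pushforwardVF s sinv hinv X⁆ g x = ⁅X, Y⁆ g x
  rw [commutator_add_pushforwardVF_apply_of_hfdifferential_eq_neg hinv hinv' hsx hds,
    commutator_add_pushforwardVF_apply_of_hfdifferential_eq_neg hinv hinv' hsx hds]
  simp only [Derivation.commutator_apply, ContMDiffMap.coe_sub, Pi.sub_apply] at hlie ⊢
  linarith

/-- (Torsion-free part of Proposition 1.3.) Let `M` be a smooth
finite-dimensional manifold, `x ∈ M`, and `s` a smooth diffeomorphism of `M` (with
smooth inverse `sinv`) such that `s x = x` and whose differential at `x` is `-id`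
on `T_xM`. Then for all smooth vector fields `X, Y`,
`(1/2)[X, Y + s_*Y]_x - (1/2)[Y, X + s_*X]_x = [X, Y]_x`. -/
theorem statement2
    {E : Type*} [NormedAddCommGroup E] [NormedSpace ℝ E] [FiniteDimensional ℝ E]
    {H : Type*} [TopologicalSpace H] {I : ModelWithCorners ℝ E H} [I.Boundaryless]
    {M : Type*} [TopologicalSpace M] [ChartedSpace H M] [IsManifold I ∞ M]
    [T2Space M]
    (x : M) (s sinv : C^∞⟮I, M; I, M⟯)
    (hinv : ∀ z : M, s (sinv z) = z) (hinv' : ∀ z : M, sinv (s z) = z)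
    (hsx : s x = x)
    (hds : ∀ v : PointDerivation I x, 𝒅ₕ hsx v = -v) :
    ∀ X Y : Derivation ℝ C^∞⟮I, M; ℝ⟯ C^∞⟮I, M; ℝ⟯,
      (1/2 : ℝ) • Derivation.evalAt x ⁅X, Y + pushforwardVF s sinv hinv Y⁆
        - (1/2 : ℝ) • Derivation.evalAt x ⁅Y, X + pushforwardVF s sinv hinv X⁆
        = Derivation.evalAt x ⁅X, Y⁆ :=
  statement2_general x s sinv hinv hinv' hsx hds
end

section
/- Let M be a smooth finite-dimensional manifold, x ∈ M, and s : M → M a smooth diffeomorphism with s(x) = x whose differential at x equals −id on T_xM. Then for all smooth vector fields X, Y on M, [X, Y + s_*Y]_x = [X, s_*Y + s_*(s_*Y)]_x; equivalently, the connection (∇^s_X Y)_x := (1/2)[X, Y + s_*Y]_x satisfies (∇^s_{X_x} Y) = (∇^s_{X_x} (s_*Y)), i.e. ∇^s admits the 2-jet of s at x as an affine 2-jet. -/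
/-!
Put `T := Y + s_*Y`. Since `ds_x = -id`, `(s_*Y)_x = -Y_x`, so `T` vanishes at `x`, and
`s_*T = s_*Y + s_*(s_*Y)`. For a vector field `Z` vanishing at `x`, `f ↦ ⁅X, Z⁆_x f = X_x (Z f)`
is a point derivation at `x`, hence also reverses sign under `f ↦ f ∘ s`; therefore
`⁅X, s_*Z⁆_x f = X_x ((Z (f ∘ s)) ∘ s⁻¹) = -X_x (Z (f ∘ s)) = -⁅X, Z⁆_x (f ∘ s) = ⁅X, Z⁆_x f`.
-/

open scoped Manifold
local notation "∞" => (⊤ : ℕ∞)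

section

variable {E : Type*} [NormedAddCommGroup E] [NormedSpace ℝ E]
  {H : Type*} [TopologicalSpace H] {I : ModelWithCorners ℝ E H}
  {M : Type*} [TopologicalSpace M] [ChartedSpace H M]

theorem pushforwardVF_apply_apply (s sinv : C^∞⟮I, M; I, M⟯) (hs : ∀ z : M, s (sinv z) = z)
    (Y : Derivation ℝ C^∞⟮I, M; ℝ⟯ C^∞⟮I, M; ℝ⟯) (f : C^∞⟮I, M; ℝ⟯) (z : M) :
    pushforwardVF s sinv hs Y f z = Y (f.comp s) (sinv z) :=
  rfl

theorem pushforwardVF_add (s sinv : C^∞⟮I, M; I, M⟯) (hs : ∀ z : M, s (sinv z) = z)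
    (Y Z : Derivation ℝ C^∞⟮I, M; ℝ⟯ C^∞⟮I, M; ℝ⟯) :
    pushforwardVF s sinv hs (Y + Z) = pushforwardVF s sinv hs Y + pushforwardVF s sinv hs Z :=
  rfl

theorem Derivation.commutator_apply_at_of_vanishing {x : M}
    (X Z : Derivation ℝ C^∞⟮I, M; ℝ⟯ C^∞⟮I, M; ℝ⟯) (hZ : ∀ g : C^∞⟮I, M; ℝ⟯, Z g x = 0)
    (g : C^∞⟮I, M; ℝ⟯) :
    ⁅X, Z⁆ g x = X (Z g) x := by
  simp [Derivation.commutator_apply, hZ]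

section Symmetry

variable {x : M} {s sinv : C^∞⟮I, M; I, M⟯} (hsx : s x = x)

theorem PointDerivation.apply_comp_eq_neg (hds : ∀ v : PointDerivation I x, 𝒅ₕ hsx v = -v)
    (v : PointDerivation I x) (g : C^∞⟮I, M; ℝ⟯) :
    v (g.comp s) = -v g :=
  DFunLike.congr_fun (hds v) g

theorem PointDerivation.apply_comp_inv_eq_neg (hds : ∀ v : PointDerivation I x, 𝒅ₕ hsx v = -v)
    (hinv' : ∀ z : M, sinv (s z) = z) (v : PointDerivation I x) (g : C^∞⟮I, M; ℝ⟯) :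
    v (g.comp sinv) = -v g := by
  have hcomp : (g.comp sinv).comp s = g := by ext z; simp [hinv' z]
  rw [← hcomp, PointDerivation.apply_comp_eq_neg hsx hds, hcomp, neg_neg]

theorem pushforwardVF_apply_at_fixedPoint (hds : ∀ v : PointDerivation I x, 𝒅ₕ hsx v = -v)
    (hinv : ∀ z : M, s (sinv z) = z) (hinv' : ∀ z : M, sinv (s z) = z)
    (Z : Derivation ℝ C^∞⟮I, M; ℝ⟯ C^∞⟮I, M; ℝ⟯) (g : C^∞⟮I, M; ℝ⟯) :
    pushforwardVF s sinv hinv Z g x = -Z g x := by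
  have hsinvx : sinv x = x := by simpa [hsx] using hinv' x
  rw [pushforwardVF_apply_apply, hsinvx]
  exact PointDerivation.apply_comp_eq_neg hsx hds (Derivation.evalAt x Z) g

theorem add_pushforwardVF_apply_at_fixedPoint
    (hds : ∀ v : PointDerivation I x, 𝒅ₕ hsx v = -v) (hinv : ∀ z : M, s (sinv z) = z)
    (hinv' : ∀ z : M, sinv (s z) = z) (Y : Derivation ℝ C^∞⟮I, M; ℝ⟯ C^∞⟮I, M; ℝ⟯)
    (g : C^∞⟮I, M; ℝ⟯) :
    (Y + pushforwardVF s sinv hinv Y) g x = 0 := by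
  simp [pushforwardVF_apply_at_fixedPoint hsx hds hinv hinv']

theorem evalAt_commutator_pushforwardVF_of_vanishing
    (hds : ∀ v : PointDerivation I x, 𝒅ₕ hsx v = -v)
    (hinv : ∀ z : M, s (sinv z) = z) (hinv' : ∀ z : M, sinv (s z) = z)
    (X Z : Derivation ℝ C^∞⟮I, M; ℝ⟯ C^∞⟮I, M; ℝ⟯) (hZ : ∀ g : C^∞⟮I, M; ℝ⟯, Z g x = 0) :
    Derivation.evalAt x ⁅X, pushforwardVF s sinv hinv Z⁆ = Derivation.evalAt x ⁅X, Z⁆ := by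
  have hsZ (g : C^∞⟮I, M; ℝ⟯) : pushforwardVF s sinv hinv Z g x = 0 := by
    rw [pushforwardVF_apply_at_fixedPoint hsx hds hinv hinv', hZ, neg_zero]
  ext (f : C^∞⟮I, M; ℝ⟯)
  calc ⁅X, pushforwardVF s sinv hinv Z⁆ f x
      = X ((Z (f.comp s)).comp sinv) x := Derivation.commutator_apply_at_of_vanishing X _ hsZ f
    _ = -X (Z (f.comp s)) x :=
        PointDerivation.apply_comp_inv_eq_neg hsx hds hinv' (Derivation.evalAt x X) _
    _ = -⁅X, Z⁆ (f.comp s) x := by rw [Derivation.commutator_apply_at_of_vanishing X Z hZ]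
    _ = ⁅X, Z⁆ f x := by
        rw [← Derivation.evalAt_apply,
          PointDerivation.apply_comp_eq_neg hsx hds (Derivation.evalAt x ⁅X, Z⁆), neg_neg]
        rfl

end Symmetry

end

theorem statement3_general
    {E : Type*} [NormedAddCommGroup E] [NormedSpace ℝ E]
    {H : Type*} [TopologicalSpace H] {I : ModelWithCorners ℝ E H}
    {M : Type*} [TopologicalSpace M] [ChartedSpace H M]
    (x : M) (s sinv : C^∞⟮I, M; I, M⟯)
    (hinv : ∀ z : M, s (sinv z) = z) (hinv' : ∀ z : M, sinv (s z) = z)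
    (hsx : s x = x)
    (hds : ∀ v : PointDerivation I x, 𝒅ₕ hsx v = -v) :
    ∀ X Y : Derivation ℝ C^∞⟮I, M; ℝ⟯ C^∞⟮I, M; ℝ⟯,
      Derivation.evalAt x ⁅X, Y + pushforwardVF s sinv hinv Y⁆
        = Derivation.evalAt x
            ⁅X, pushforwardVF s sinv hinv Y
                + pushforwardVF s sinv hinv (pushforwardVF s sinv hinv Y)⁆ := by
  intro X Y
  rw [← pushforwardVF_add]
  exact (evalAt_commutator_pushforwardVF_of_vanishing hsx hds hinv hinv' X _
    (add_pushforwardVF_apply_at_fixedPoint hsx hds hinv hinv' Y)).symm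

/-- (Lemma 1.8.) Let `M` be a smooth finite-dimensional manifold,
`x ∈ M`, and `s` a smooth diffeomorphism of `M` (with smooth inverse `sinv`) such
that `s x = x` and whose differential at `x` is `-id` on `T_xM`. Then for all smooth
vector fields `X, Y`, `[X, Y + s_*Y]_x = [X, s_*Y + s_*(s_*Y)]_x`; equivalently, the
connection `(∇^s_X Y)_x := (1/2)[X, Y + s_*Y]_x` satisfies `∇^s_{X_x} Y = ∇^s_{X_x}(s_*Y)`,
i.e. `∇^s` admits the 2-jet of `s` at `x` as an affine 2-jet. -/
theorem statement3
    {E : Type*} [NormedAddCommGroup E] [NormedSpace ℝ E] [FiniteDimensional ℝ E]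
    {H : Type*} [TopologicalSpace H] {I : ModelWithCorners ℝ E H} [I.Boundaryless]
    {M : Type*} [TopologicalSpace M] [ChartedSpace H M] [IsManifold I ∞ M]
    [T2Space M]
    (x : M) (s sinv : C^∞⟮I, M; I, M⟯)
    (hinv : ∀ z : M, s (sinv z) = z) (hinv' : ∀ z : M, sinv (s z) = z)
    (hsx : s x = x)
    (hds : ∀ v : PointDerivation I x, 𝒅ₕ hsx v = -v) :
    ∀ X Y : Derivation ℝ C^∞⟮I, M; ℝ⟯ C^∞⟮I, M; ℝ⟯,
      Derivation.evalAt x ⁅X, Y + pushforwardVF s sinv hinv Y⁆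
        = Derivation.evalAt x
            ⁅X, pushforwardVF s sinv hinv Y
                + pushforwardVF s sinv hinv (pushforwardVF s sinv hinv Y)⁆ :=
  statement3_general x s sinv hinv hinv' hsx hds
end

section
/- Let E be a finite-dimensional real normed vector space, x₀ ∈ E, and s : E → E a smooth map with s(s(z)) = z for all z, s(x₀) = x₀ and Ds(x₀) = −id_E. For a vector field Y on E define the pushforward (s_*Y)(z) = Ds(s(z))(Y(s(z))). Then for all vector fields X, Y on E, (1/2)[X, Y + s_*Y](x₀) = DY(x₀)(X(x₀)) − (1/2)·D²s(x₀)(X(x₀), Y(x₀)). In particular, in linear coordinates the connection defined by formula (5) has Christoffel symbols Γ^k_{ij}(x₀) = −(1/2)·∂²s^k/∂x^i∂x^j(x₀). -/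
/-- (Remark 1.4 / D'Atri's formula in a chart.) Let `E` be a
finite-dimensional real normed vector space, `x₀ ∈ E`, and `s : E → E` a smooth map with
`s (s z) = z` for all `z`, `s x₀ = x₀` and `Ds(x₀) = -id`. For a vector field `Y` on `E`
the pushforward is `(s_*Y) z = Ds(s z)(Y (s z))`. Then for all smooth vector fields
`X, Y` on `E`,
`(1/2)·[X, Y + s_*Y](x₀) = DY(x₀)(X x₀) - (1/2)·D²s(x₀)(X x₀, Y x₀)`. -/
theorem statement7 {E : Type*} [NormedAddCommGroup E] [NormedSpace ℝ E]
    [FiniteDimensional ℝ E]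
    (x₀ : E) (s : E → E) (hs : ContDiff ℝ (⊤ : ℕ∞) s)
    (hinvol : ∀ z : E, s (s z) = z)
    (hfix : s x₀ = x₀)
    (hds : fderiv ℝ s x₀ = -(ContinuousLinearMap.id ℝ E))
    (X Y : E → E) (hX : ContDiff ℝ (⊤ : ℕ∞) X) (hY : ContDiff ℝ (⊤ : ℕ∞) Y) :
    (1/2 : ℝ) • VectorField.lieBracket ℝ X (fun z => Y z + fderiv ℝ s (s z) (Y (s z))) x₀
      = fderiv ℝ Y x₀ (X x₀) - (1/2 : ℝ) • fderiv ℝ (fderiv ℝ s) x₀ (X x₀) (Y x₀) := by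
  have hsd : Differentiable ℝ s := hs.differentiable (by simp)
  have hh : ContDiff ℝ (⊤ : ℕ∞) (fderiv ℝ s) := hs.fderiv_right (by simp)
  have hhd : Differentiable ℝ (fderiv ℝ s) := hh.differentiable (by simp)
  have hYd : Differentiable ℝ Y := hY.differentiable (by simp)
  have hXd : Differentiable ℝ X := hX.differentiable (by simp)
  have hc : DifferentiableAt ℝ (fun z => fderiv ℝ s (s z)) x₀ :=
    (hhd (s x₀)).comp x₀ (hsd x₀)
  have hu : DifferentiableAt ℝ (fun z => Y (s z)) x₀ :=
    (hYd (s x₀)).comp x₀ (hsd x₀)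
  have h2 : fderiv ℝ (fun z => fderiv ℝ s (s z) (Y (s z))) x₀ =
      (fderiv ℝ s (s x₀)).comp (fderiv ℝ (fun z => Y (s z)) x₀) +
      (fderiv ℝ (fun z => fderiv ℝ s (s z)) x₀).flip (Y (s x₀)) :=
    fderiv_clm_apply hc hu
  have hcomp1 : fderiv ℝ (fun z => fderiv ℝ s (s z)) x₀ =
      (fderiv ℝ (fderiv ℝ s) x₀).comp (fderiv ℝ s x₀) := by
    rw [show (fun z => fderiv ℝ s (s z)) = fderiv ℝ s ∘ s from rfl,
      fderiv_comp x₀ (hhd (s x₀)) (hsd x₀), hfix]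
  have hcomp2 : fderiv ℝ (fun z => Y (s z)) x₀ = (fderiv ℝ Y x₀).comp (fderiv ℝ s x₀) := by
    rw [show (fun z => Y (s z)) = Y ∘ s from rfl,
      fderiv_comp x₀ (hYd (s x₀)) (hsd x₀), hfix]
  have hWd : DifferentiableAt ℝ (fun z => Y z + fderiv ℝ s (s z) (Y (s z))) x₀ :=
    (hYd x₀).add (hc.clm_apply hu)
  have hW0 : Y x₀ + fderiv ℝ s (s x₀) (Y (s x₀)) = 0 := by
    rw [hfix, hds]; simp
  have hfW : fderiv ℝ (fun z => Y z + fderiv ℝ s (s z) (Y (s z))) x₀ =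
      fderiv ℝ Y x₀ + ((fderiv ℝ s (s x₀)).comp (fderiv ℝ (fun z => Y (s z)) x₀) +
      (fderiv ℝ (fun z => fderiv ℝ s (s z)) x₀).flip (Y (s x₀))) := by
    rw [fderiv_fun_add (hYd x₀) (hc.clm_apply hu), h2]
  rw [VectorField.lieBracket]
  rw [hW0]
  rw [hfW, hcomp1, hcomp2, hfix, hds]
  simp only [map_zero, sub_zero, ContinuousLinearMap.add_apply,
    ContinuousLinearMap.comp_apply, ContinuousLinearMap.flip_apply,
    ContinuousLinearMap.neg_apply, ContinuousLinearMap.coe_id', id_eq, map_neg]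
  module
end

section
/- Let E be a finite-dimensional real normed vector space, x₀ ∈ E, B : E → L(E,E) a smooth map into the continuous linear endomorphisms of E with B(x₀) = −id_E, and ψ : E → E a smooth map with ψ(x₀) = x₀ and Dψ(x₀) = −id_E. For a vector field Y on E define (bY)(z) = B(ψ(z))(Y(ψ(z))). Then for all vector fields X, Y on E, (1/2)[X, Y + bY](x₀) = DY(x₀)(X(x₀)) − (1/2)·(DB(x₀)(X(x₀)))(Y(x₀)). -/
/-- (Local content of formula (9) in Proposition 2.2.) Let `E` be a
finite-dimensional real normed vector space, `x₀ ∈ E`, `B : E → L(E,E)` smooth with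
`B x₀ = -id`, and `ψ : E → E` smooth with `ψ x₀ = x₀` and `Dψ(x₀) = -id`. For a vector
field `Y` on `E` set `(bY) z = B(ψ z)(Y (ψ z))`. Then for all smooth vector fields `X, Y`,
`(1/2)·[X, Y + bY](x₀) = DY(x₀)(X x₀) - (1/2)·(DB(x₀)(X x₀))(Y x₀)`. -/
theorem statement8 {E : Type*} [NormedAddCommGroup E] [NormedSpace ℝ E]
    [FiniteDimensional ℝ E]
    (x₀ : E) (B : E → (E →L[ℝ] E)) (hB : ContDiff ℝ (⊤ : ℕ∞) B)
    (hBx : B x₀ = -(ContinuousLinearMap.id ℝ E))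
    (ψ : E → E) (hψ : ContDiff ℝ (⊤ : ℕ∞) ψ) (hψx : ψ x₀ = x₀)
    (hdψ : fderiv ℝ ψ x₀ = -(ContinuousLinearMap.id ℝ E))
    (X Y : E → E) (hX : ContDiff ℝ (⊤ : ℕ∞) X) (hY : ContDiff ℝ (⊤ : ℕ∞) Y) :
    (1/2 : ℝ) • VectorField.lieBracket ℝ X (fun z => Y z + B (ψ z) (Y (ψ z))) x₀
      = fderiv ℝ Y x₀ (X x₀) - (1/2 : ℝ) • (fderiv ℝ B x₀ (X x₀)) (Y x₀) := by
  have hBd : DifferentiableAt ℝ B x₀ := hB.differentiable (by simp) x₀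
  have hYd : ∀ x, DifferentiableAt ℝ Y x := fun x => hY.differentiable (by simp) x
  have hψd : DifferentiableAt ℝ ψ x₀ := hψ.differentiable (by simp) x₀
  -- g z = B z (Y z)
  have hgd : DifferentiableAt ℝ (fun z => B z (Y z)) x₀ := hBd.clm_apply (hYd x₀)
  have hg : fderiv ℝ (fun z => B z (Y z)) x₀
      = (B x₀).comp (fderiv ℝ Y x₀) + (fderiv ℝ B x₀).flip (Y x₀) :=
    fderiv_clm_apply hBd (hYd x₀)
  have hgd' : DifferentiableAt ℝ (fun z => B z (Y z)) (ψ x₀) := by rw [hψx]; exact hgd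
  -- composition with ψ
  have hcomp : fderiv ℝ (fun z => B (ψ z) (Y (ψ z))) x₀
      = (fderiv ℝ (fun z => B z (Y z)) x₀).comp (fderiv ℝ ψ x₀) := by
    have := fderiv_comp (𝕜 := ℝ) x₀ hgd' hψd
    · rw [hψx] at this; exact this
  have hbYd : DifferentiableAt ℝ (fun z => B (ψ z) (Y (ψ z))) x₀ := by
    have : DifferentiableAt ℝ ((fun z => B z (Y z)) ∘ ψ) x₀ :=
      DifferentiableAt.comp x₀ hgd' hψd
    exact this
  have hZd : fderiv ℝ (fun z => Y z + B (ψ z) (Y (ψ z))) x₀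
      = fderiv ℝ Y x₀ + fderiv ℝ (fun z => B (ψ z) (Y (ψ z))) x₀ :=
    fderiv_add (hYd x₀) hbYd
  have hZ0 : Y x₀ + B (ψ x₀) (Y (ψ x₀)) = 0 := by
    simp [hψx, hBx]
  rw [VectorField.lieBracket]
  rw [hZd, hcomp, hg, hdψ]
  have h2 : fderiv ℝ X x₀ (Y x₀ + B (ψ x₀) (Y (ψ x₀))) = 0 := by
    rw [hZ0]; simp
  simp only [ContinuousLinearMap.add_apply, ContinuousLinearMap.comp_apply,
    ContinuousLinearMap.neg_apply, ContinuousLinearMap.coe_id', id_eq,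
    ContinuousLinearMap.flip_apply, hBx, h2, map_neg]
  module
end

section
/- Let E be a finite-dimensional real normed vector space, x₀ ∈ E, B : E → L(E,E) a smooth map into the continuous linear endomorphisms of E with B(x₀) = −id_E, and ψ : E → E a smooth map with ψ(x₀) = x₀ and Dψ(x₀) = −id_E. For a vector field Y on E define (bY)(z) = B(ψ(z))(Y(ψ(z))) and set (∇_X Y)(x₀) := (1/2)[X, Y + bY](x₀). Then for all vector fields X, Y on E the torsion at x₀ satisfies (∇_X Y)(x₀) − (∇_Y X)(x₀) − [X,Y](x₀) = (1/2)·((DB(x₀)(Y(x₀)))(X(x₀)) − (DB(x₀)(X(x₀)))(Y(x₀))); in particular the torsion at x₀ vanishes for all X, Y if and only if the bilinear map (u,v) ↦ (DB(x₀)(u))(v) is symmetric. -/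
open VectorField

lemma fderiv_bfield {E : Type*} [NormedAddCommGroup E] [NormedSpace ℝ E]
    (x₀ : E) (B : E → (E →L[ℝ] E)) (hB : ContDiff ℝ (⊤ : ℕ∞) B)
    (hBx : B x₀ = -(ContinuousLinearMap.id ℝ E))
    (ψ : E → E) (hψ : ContDiff ℝ (⊤ : ℕ∞) ψ) (hψx : ψ x₀ = x₀)
    (hdψ : fderiv ℝ ψ x₀ = -(ContinuousLinearMap.id ℝ E))
    (Y : E → E) (hY : ContDiff ℝ (⊤ : ℕ∞) Y) (v : E) :
    fderiv ℝ (fun z => Y z + B (ψ z) (Y (ψ z))) x₀ v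
      = (2 : ℝ) • fderiv ℝ Y x₀ v - fderiv ℝ B x₀ v (Y x₀) := by
  have hBd : DifferentiableAt ℝ B x₀ := hB.differentiable (by simp) x₀
  have hYd : DifferentiableAt ℝ Y x₀ := hY.differentiable (by simp) x₀
  have hψd : DifferentiableAt ℝ ψ x₀ := hψ.differentiable (by simp) x₀
  have hhd : DifferentiableAt ℝ (fun w => B w (Y w)) x₀ := hBd.clm_apply hYd
  have hcomp : (fun z => B (ψ z) (Y (ψ z))) = (fun w => B w (Y w)) ∘ ψ := rfl
  have hhd' : DifferentiableAt ℝ (fun w => B w (Y w)) (ψ x₀) := by rw [hψx]; exact hhd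
  have hgd : DifferentiableAt ℝ (fun z => B (ψ z) (Y (ψ z))) x₀ := by
    rw [hcomp]
    exact hhd'.comp x₀ hψd
  rw [fderiv_fun_add hYd hgd, hcomp, fderiv_comp x₀ hhd' hψd, hψx,
    fderiv_clm_apply hBd hYd, hdψ]
  simp [hBx, two_smul]
  abel

/-- The torsion at `x₀` of the connection `(∇_X Y)(x₀) = (1/2)[X, Y + bY](x₀)`,
where `(bY) z = B(ψ z)(Y(ψ z))`, evaluated on the vector fields `X, Y`. -/
noncomputable def torsionAt {E : Type*} [NormedAddCommGroup E] [NormedSpace ℝ E]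
    (x₀ : E) (B : E → (E →L[ℝ] E)) (ψ : E → E) (X Y : E → E) : E :=
  (1/2 : ℝ) • lieBracket ℝ X (fun z => Y z + B (ψ z) (Y (ψ z))) x₀
    - (1/2 : ℝ) • lieBracket ℝ Y (fun z => X z + B (ψ z) (X (ψ z))) x₀
    - lieBracket ℝ X Y x₀

/-- (Local content of Corollary 4.2.) In the setting of Statement 8,
for all smooth vector fields `X, Y` the torsion at `x₀` equals
`(1/2)·((DB(x₀)(Y x₀))(X x₀) - (DB(x₀)(X x₀))(Y x₀))`; in particular the torsion at `x₀`
vanishes for all `X, Y` iff `(u,v) ↦ (DB(x₀) u) v` is symmetric. -/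
theorem statement9 {E : Type*} [NormedAddCommGroup E] [NormedSpace ℝ E]
    [FiniteDimensional ℝ E]
    (x₀ : E) (B : E → (E →L[ℝ] E)) (hB : ContDiff ℝ (⊤ : ℕ∞) B)
    (hBx : B x₀ = -(ContinuousLinearMap.id ℝ E))
    (ψ : E → E) (hψ : ContDiff ℝ (⊤ : ℕ∞) ψ) (hψx : ψ x₀ = x₀)
    (hdψ : fderiv ℝ ψ x₀ = -(ContinuousLinearMap.id ℝ E)) :
    (∀ X Y : E → E, ContDiff ℝ (⊤ : ℕ∞) X → ContDiff ℝ (⊤ : ℕ∞) Y →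
      torsionAt x₀ B ψ X Y
        = (1/2 : ℝ) • ((fderiv ℝ B x₀ (Y x₀)) (X x₀) - (fderiv ℝ B x₀ (X x₀)) (Y x₀)))
    ∧ ((∀ X Y : E → E, ContDiff ℝ (⊤ : ℕ∞) X → ContDiff ℝ (⊤ : ℕ∞) Y → torsionAt x₀ B ψ X Y = 0)
        ↔ ∀ u v : E, fderiv ℝ B x₀ u v = fderiv ℝ B x₀ v u) := by
  have main : ∀ X Y : E → E, ContDiff ℝ (⊤ : ℕ∞) X → ContDiff ℝ (⊤ : ℕ∞) Y →
      torsionAt x₀ B ψ X Y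
        = (1/2 : ℝ) • ((fderiv ℝ B x₀ (Y x₀)) (X x₀) - (fderiv ℝ B x₀ (X x₀)) (Y x₀)) := by
    intro X Y hX hY
    have hzY : Y x₀ + B (ψ x₀) (Y (ψ x₀)) = 0 := by simp [hψx, hBx]
    have hzX : X x₀ + B (ψ x₀) (X (ψ x₀)) = 0 := by simp [hψx, hBx]
    unfold torsionAt
    rw [lieBracket, lieBracket, lieBracket]
    rw [hzY, hzX]
    rw [fderiv_bfield x₀ B hB hBx ψ hψ hψx hdψ Y hY (X x₀),
        fderiv_bfield x₀ B hB hBx ψ hψ hψx hdψ X hX (Y x₀)]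
    simp only [map_zero, sub_zero]
    rw [smul_sub, smul_sub, smul_smul, smul_smul]
    norm_num
    module
  refine ⟨main, ?_, ?_⟩
  · intro h u v
    have := (main (fun _ => u) (fun _ => v) contDiff_const contDiff_const).symm.trans
      (h (fun _ => u) (fun _ => v) contDiff_const contDiff_const)
    have h2 : fderiv ℝ B x₀ v u - fderiv ℝ B x₀ u v = 0 := by
      have := congrArg (fun w => (2:ℝ) • w) this
      simpa [smul_smul] using this
    linear_combination (norm := abel) h2.symm
  · intro h X Y hX hY
    rw [main X Y hX hY, h (Y x₀) (X x₀)]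
    simp
end

section
/- Let V be a finite-dimensional real vector space and h a nondegenerate symmetric bilinear form on V. Let S denote the vector space of linear maps A : V → End(V) satisfying A(u)(v) = A(v)(u) for all u, v ∈ V, and let W denote the vector space of linear maps from V to the space of symmetric bilinear forms on V. Then the linear map Φ : S → W defined by Φ(A)(u)(v, w) = −(1/2)·(h(A(u)v, w) + h(v, A(u)w)) is a linear isomorphism. -/
/-- The space `S` of linear maps `A : V → End(V)` (curried as `V →ₗ V →ₗ V`) satisfying
the symmetry `A u v = A v u`. -/
noncomputable def symmPairMaps (V : Type*) [AddCommGroup V] [Module ℝ V] :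
    Submodule ℝ (V →ₗ[ℝ] V →ₗ[ℝ] V) where
  carrier := {A | ∀ u v : V, A u v = A v u}
  add_mem' := by
    intro a b ha hb u v
    simp [ha u v, hb u v]
  zero_mem' := by intro u v; simp
  smul_mem' := by
    intro c a ha u v
    simp [ha u v]

/-- The space `W` of linear maps from `V` to the symmetric bilinear forms on `V`
(curried as trilinear forms symmetric in the last two arguments). -/
noncomputable def mapsToSymmBilin (V : Type*) [AddCommGroup V] [Module ℝ V] :
    Submodule ℝ (V →ₗ[ℝ] V →ₗ[ℝ] V →ₗ[ℝ] ℝ) where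
  carrier := {b | ∀ u v w : V, b u v w = b u w v}
  add_mem' := by
    intro a b ha hb u v w
    simp [ha u v w, hb u v w]
  zero_mem' := by intro u v w; simp
  smul_mem' := by
    intro c a ha u v w
    simp [ha u v w]

/-!
Reading `A` as Christoffel symbols and `Φ A` as the derivative of a metric, the theorem is the
algebraic core of the existence and uniqueness of the Levi-Civita connection. The inverse of `Φ`
is the Koszul formula `h (A u v) w = b w u v - b u v w - b v u w`, which defines `A` because `h`
identifies `V` with its dual. The symmetry of `A` in its two arguments and of `b` in its last two
are what make the two composites the identity.
-/

open LinearMap (BilinForm lflip)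

section

variable {K V : Type*} [Field K] [AddCommGroup V] [Module K V]

noncomputable def metricDerivOfChristoffel (h : BilinForm K V) :
    (V →ₗ[K] V →ₗ[K] V) →ₗ[K] V →ₗ[K] V →ₗ[K] V →ₗ[K] K where
  toFun A := -(1 / 2 : K) • (A.compr₂ h + (lflip (R₀ := K)).toLinearMap ∘ₗ A.compr₂ h.flip)
  map_add' A B := by
    ext
    simp
    ring
  map_smul' c A := by
    ext
    simp
    ring

@[simp]
theorem metricDerivOfChristoffel_apply (h : BilinForm K V) (A : V →ₗ[K] V →ₗ[K] V) (u v w : V) :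
    metricDerivOfChristoffel h A u v w = -(1 / 2 : K) * (h (A u v) w + h v (A u w)) :=
  rfl

theorem metricDerivOfChristoffel_apply_swap {h : BilinForm K V} (hsymm : ∀ v w, h v w = h w v)
    (A : V →ₗ[K] V →ₗ[K] V) (u v w : V) :
    metricDerivOfChristoffel h A u v w = metricDerivOfChristoffel h A u w v := by
  simp only [metricDerivOfChristoffel_apply, hsymm v, hsymm w, add_comm]

-- Instance search does not find `Sub` on trilinear maps, hence `(-1 : K) •`.
noncomputable def koszulForm (b : V →ₗ[K] V →ₗ[K] V →ₗ[K] K) : V →ₗ[K] V →ₗ[K] V →ₗ[K] K :=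
  (lflip (R₀ := K)).toLinearMap ∘ₗ b.flip + (-1 : K) • (b + b.flip)

@[simp]
theorem koszulForm_apply (b : V →ₗ[K] V →ₗ[K] V →ₗ[K] K) (u v w : V) :
    koszulForm b u v w = b w u v - b u v w - b v u w := by
  simp [koszulForm]
  ring

variable [FiniteDimensional K V]

noncomputable def christoffelOfMetricDeriv {h : BilinForm K V} (hh : h.Nondegenerate)
    (b : V →ₗ[K] V →ₗ[K] V →ₗ[K] K) : V →ₗ[K] V →ₗ[K] V :=
  (koszulForm b).compr₂ (h.toDual hh).symm.toLinearMap

@[simp]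
theorem apply_christoffelOfMetricDeriv_apply {h : BilinForm K V} (hh : h.Nondegenerate)
    (b : V →ₗ[K] V →ₗ[K] V →ₗ[K] K) (u v w : V) :
    h (christoffelOfMetricDeriv hh b u v) w = koszulForm b u v w :=
  BilinForm.apply_toDual_symm_apply (hB := hh) _ _

theorem christoffelOfMetricDeriv_swap {h : BilinForm K V} (hh : h.Nondegenerate)
    {b : V →ₗ[K] V →ₗ[K] V →ₗ[K] K} (hb : ∀ u v w, b u v w = b u w v) (u v : V) :
    christoffelOfMetricDeriv hh b u v = christoffelOfMetricDeriv hh b v u :=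
  congrArg (h.toDual hh).symm <| LinearMap.ext fun w => by
    simp only [koszulForm_apply, hb w u v]
    ring

variable [NeZero (2 : K)]

theorem christoffelOfMetricDeriv_metricDerivOfChristoffel {h : BilinForm K V}
    (hsymm : ∀ v w, h v w = h w v) (hh : h.Nondegenerate) {A : V →ₗ[K] V →ₗ[K] V}
    (hA : ∀ u v, A u v = A v u) :
    christoffelOfMetricDeriv hh (metricDerivOfChristoffel h A) = A := by
  ext u v
  refine (LinearEquiv.symm_apply_eq _).2 <| LinearMap.ext fun w => ?_
  simp only [koszulForm_apply, metricDerivOfChristoffel_apply, BilinForm.toDual_def, hA w, hA v u,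
    hsymm u, hsymm v (A u w)]
  linear_combination h (A u v) w * mul_inv_cancel₀ (two_ne_zero : (2 : K) ≠ 0)

theorem metricDerivOfChristoffel_christoffelOfMetricDeriv {h : BilinForm K V}
    (hsymm : ∀ v w, h v w = h w v) (hh : h.Nondegenerate) {b : V →ₗ[K] V →ₗ[K] V →ₗ[K] K}
    (hb : ∀ u v w, b u v w = b u w v) :
    metricDerivOfChristoffel h (christoffelOfMetricDeriv hh b) = b := by
  ext u v w
  simp only [metricDerivOfChristoffel_apply, hsymm v, apply_christoffelOfMetricDeriv_apply,
    koszulForm_apply, hb w u v, hb v u w, hb u w v]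
  linear_combination b u v w * mul_inv_cancel₀ (two_ne_zero : (2 : K) ≠ 0)

end

section

variable {V : Type*} [AddCommGroup V] [Module ℝ V] [FiniteDimensional ℝ V]

noncomputable def metricDerivEquiv {h : BilinForm ℝ V} (hsymm : ∀ v w, h v w = h w v)
    (hh : h.Nondegenerate) : symmPairMaps V ≃ₗ[ℝ] mapsToSymmBilin V where
  toLinearMap := (metricDerivOfChristoffel h).restrict fun A _ =>
    metricDerivOfChristoffel_apply_swap hsymm A
  invFun b := ⟨christoffelOfMetricDeriv hh b, christoffelOfMetricDeriv_swap hh b.2⟩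
  left_inv A := Subtype.ext <| christoffelOfMetricDeriv_metricDerivOfChristoffel hsymm hh A.2
  right_inv b := Subtype.ext <| metricDerivOfChristoffel_christoffelOfMetricDeriv hsymm hh b.2

end

/-- (The correspondence underlying Proposition 10.2.) Let `V` be a
finite-dimensional real vector space and `h` a nondegenerate symmetric bilinear form on
`V`. Then the linear map `Φ` from the space `S` of linear maps `A : V → End(V)` with
`A u v = A v u` to the space `W` of linear maps from `V` to symmetric bilinear forms,
defined by `Φ(A)(u)(v,w) = -(1/2)·(h (A u v) w + h v (A u w))`, is a linear isomorphism. -/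
theorem statement11 {V : Type*} [AddCommGroup V] [Module ℝ V] [FiniteDimensional ℝ V]
    (h : V →ₗ[ℝ] V →ₗ[ℝ] ℝ)
    (hsymm : ∀ v w : V, h v w = h w v)
    (hnondeg : ∀ v : V, (∀ w : V, h v w = 0) → v = 0) :
    ∃ Φ : symmPairMaps V ≃ₗ[ℝ] mapsToSymmBilin V,
      ∀ (A : symmPairMaps V) (u v w : V),
        (Φ A : V →ₗ[ℝ] V →ₗ[ℝ] V →ₗ[ℝ] ℝ) u v w
          = -(1/2 : ℝ) * (h ((A : V →ₗ[ℝ] V →ₗ[ℝ] V) u v) w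
              + h v ((A : V →ₗ[ℝ] V →ₗ[ℝ] V) u w)) :=
  ⟨metricDerivEquiv hsymm (.ofSeparatingLeft hnondeg), fun A u v w =>
    metricDerivOfChristoffel_apply h A u v w⟩
end

section
/- Let E be a finite-dimensional real normed vector space, let f, g, h : E → E be smooth maps, and let x, y ∈ E with h(y) = x, f(x) = x and Df(x) = id_E. Then for all u, v ∈ E, D²(g∘f∘h)(y)(u, v) = Dg(x)(D²f(x)(Dh(y)(u), Dh(y)(v))) + D²(g∘h)(y)(u, v). -/
open ContinuousLinearMap in
lemma second_fderiv_comp {E : Type*} [NormedAddCommGroup E] [NormedSpace ℝ E]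
    (φ ψ : E → E) (hφ : ContDiff ℝ (⊤ : ℕ∞) φ) (hψ : ContDiff ℝ (⊤ : ℕ∞) ψ) (y u v : E) :
    fderiv ℝ (fderiv ℝ (fun z => φ (ψ z))) y u v
      = fderiv ℝ (fderiv ℝ φ) (ψ y) (fderiv ℝ ψ y u) (fderiv ℝ ψ y v)
        + fderiv ℝ φ (ψ y) (fderiv ℝ (fderiv ℝ ψ) y u v) := by
  have hφd : Differentiable ℝ φ := hφ.differentiable (by simp)
  have hψd : Differentiable ℝ ψ := hψ.differentiable (by simp)
  have hφ' : ContDiff ℝ (⊤ : ℕ∞) (fderiv ℝ φ) := hφ.fderiv_right (by simp)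
  have hψ' : ContDiff ℝ (⊤ : ℕ∞) (fderiv ℝ ψ) := hψ.fderiv_right (by simp)
  have heq : fderiv ℝ (fun z => φ (ψ z))
      = fun z => (fderiv ℝ φ (ψ z)).comp (fderiv ℝ ψ z) := by
    funext z
    exact fderiv_comp z (hφd _) (hψd _)
  rw [heq]
  have hc : DifferentiableAt ℝ (fun z => fderiv ℝ φ (ψ z)) y :=
    ((hφ'.differentiable (by simp) (ψ y)).comp y (hψd y))
  have hd : DifferentiableAt ℝ (fderiv ℝ ψ) y := hψ'.differentiable (by simp) y
  rw [fderiv_clm_comp hc hd]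
  have hcy : fderiv ℝ (fun z => fderiv ℝ φ (ψ z)) y
      = (fderiv ℝ (fderiv ℝ φ) (ψ y)).comp (fderiv ℝ ψ y) :=
    fderiv_comp y (hφ'.differentiable (by simp) (ψ y)) (hψd y)
  simp [hcy, add_comm]

/-- (Lemma D.18 in a chart.) Let `E` be a finite-dimensional real normed
vector space, `f, g, h : E → E` smooth, `x, y ∈ E` with `h y = x`, `f x = x` and
`Df(x) = id`. Then for all `u, v`,
`D²(g∘f∘h)(y)(u,v) = Dg(x)(D²f(x)(Dh(y)u, Dh(y)v)) + D²(g∘h)(y)(u,v)`. -/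
theorem statement13 {E : Type*} [NormedAddCommGroup E] [NormedSpace ℝ E]
    [FiniteDimensional ℝ E]
    (x y : E) (f g h : E → E)
    (hf : ContDiff ℝ (⊤ : ℕ∞) f) (hg : ContDiff ℝ (⊤ : ℕ∞) g) (hh : ContDiff ℝ (⊤ : ℕ∞) h)
    (hhy : h y = x) (hfx : f x = x)
    (hdf : fderiv ℝ f x = ContinuousLinearMap.id ℝ E) :
    ∀ u v : E,
      fderiv ℝ (fderiv ℝ (fun z => g (f (h z)))) y u v
        = fderiv ℝ g x (fderiv ℝ (fderiv ℝ f) x (fderiv ℝ h y u) (fderiv ℝ h y v))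
          + fderiv ℝ (fderiv ℝ (fun z => g (h z))) y u v := by
  intro u v
  set ψ : E → E := fun z => f (h z) with hψdef
  have hψ : ContDiff ℝ (⊤ : ℕ∞) ψ := hf.comp hh
  have hψy : ψ y = x := by simp [hψdef, hhy, hfx]
  have hdψ : fderiv ℝ ψ y = fderiv ℝ h y := by
    have := fderiv_comp y (hf.differentiable (by simp) (h y)) (hh.differentiable (by simp) y)
    rw [hψdef, show (fun z => f (h z)) = f ∘ h from rfl, this, hhy, hdf]
    ext w; simp
  have h1 := second_fderiv_comp g ψ hg hψ y u v
  have h2 := second_fderiv_comp f h hf hh y u v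
  have h3 := second_fderiv_comp g h hg hh y u v
  rw [hψy, hdψ] at h1
  rw [hhy, hdf] at h2
  simp only [ContinuousLinearMap.id_apply] at h2
  rw [hhy] at h3
  rw [h1, h2, h3]
  rw [map_add]
  abel
end

section
/- Let E be a finite-dimensional real normed vector space, x ∈ E, and let f, g, h : E → E be smooth maps with f(x) = x, h(x) = x, Df(x) = id_E, Dh(x) = −id_E and Dg(x) = −id_E. Then for all u, v ∈ E, D²(g∘f∘h)(x)(u, v) = −D²f(x)(u, v) + D²(g∘h)(x)(u, v). -/
open ContinuousLinearMap

lemma second_comp {E : Type*} [NormedAddCommGroup E] [NormedSpace ℝ E]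
    (a b : E → E) (ha : ContDiff ℝ (⊤ : ℕ∞) a) (hb : ContDiff ℝ (⊤ : ℕ∞) b) (x u v : E) :
    fderiv ℝ (fderiv ℝ (fun z => b (a z))) x u v
      = fderiv ℝ (fderiv ℝ b) (a x) (fderiv ℝ a x u) (fderiv ℝ a x v)
        + fderiv ℝ b (a x) (fderiv ℝ (fderiv ℝ a) x u v) := by
  have hda := ha.differentiable (by simp)
  have hdb := hb.differentiable (by simp)
  have hfa : ContDiff ℝ (⊤ : ℕ∞) (fderiv ℝ a) := ha.fderiv_right (by simp)
  have hfb : ContDiff ℝ (⊤ : ℕ∞) (fderiv ℝ b) := hb.fderiv_right (by simp)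
  have key : fderiv ℝ (fun z => b (a z)) =
      fun z => (fderiv ℝ b (a z)).comp (fderiv ℝ a z) := by
    funext z
    exact fderiv_comp z (hdb (a z)) (hda z)
  rw [key]
  have hc : DifferentiableAt ℝ (fun z => fderiv ℝ b (a z)) x :=
    ((hfb.differentiable (by simp)) (a x)).comp x (hda x)
  have hd : DifferentiableAt ℝ (fderiv ℝ a) x := (hfa.differentiable (by simp)) x
  rw [fderiv_clm_comp hc hd]
  have hfc : fderiv ℝ (fun z => fderiv ℝ b (a z)) x
      = (fderiv ℝ (fderiv ℝ b) (a x)).comp (fderiv ℝ a x) :=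
    fderiv_comp x ((hfb.differentiable (by simp)) (a x)) (hda x)
  simp [hfc, add_comm]


/-- (The `in particular` case of Lemma D.18.) Let `E` be a
finite-dimensional real normed vector space, `x ∈ E`, and `f, g, h : E → E` smooth with
`f x = x`, `h x = x`, `Df(x) = id`, `Dh(x) = -id` and `Dg(x) = -id`. Then for all `u, v`,
`D²(g∘f∘h)(x)(u,v) = -D²f(x)(u,v) + D²(g∘h)(x)(u,v)`. -/
theorem statement14 {E : Type*} [NormedAddCommGroup E] [NormedSpace ℝ E]
    [FiniteDimensional ℝ E]
    (x : E) (f g h : E → E)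
    (hf : ContDiff ℝ (⊤ : ℕ∞) f) (hg : ContDiff ℝ (⊤ : ℕ∞) g) (hh : ContDiff ℝ (⊤ : ℕ∞) h)
    (hfx : f x = x) (hhx : h x = x)
    (hdf : fderiv ℝ f x = ContinuousLinearMap.id ℝ E)
    (hdh : fderiv ℝ h x = -(ContinuousLinearMap.id ℝ E))
    (hdg : fderiv ℝ g x = -(ContinuousLinearMap.id ℝ E)) :
    ∀ u v : E,
      fderiv ℝ (fderiv ℝ (fun z => g (f (h z)))) x u v
        = -(fderiv ℝ (fderiv ℝ f) x u v)
          + fderiv ℝ (fderiv ℝ (fun z => g (h z))) x u v := by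
  intro u v
  have hA : ContDiff ℝ (⊤ : ℕ∞) (fun z => f (h z)) := hf.comp hh
  have hAx : f (h x) = x := by rw [hhx, hfx]
  have hdA : fderiv ℝ (fun z => f (h z)) x = -(ContinuousLinearMap.id ℝ E) := by
    have := fderiv_comp (g := f) x (by rw [hhx]; exact (hf.differentiable (by simp)) x)
      ((hh.differentiable (by simp)) x)
    rw [show (fun z => f (h z)) = f ∘ h from rfl, this, hhx, hdf, hdh]
    ext w; simp
  have e1 : fderiv ℝ (fderiv ℝ (fun z => g (f (h z)))) x u v
      = fderiv ℝ (fderiv ℝ g) (f (h x)) (fderiv ℝ (fun z => f (h z)) x u)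
          (fderiv ℝ (fun z => f (h z)) x v)
        + fderiv ℝ g (f (h x)) (fderiv ℝ (fderiv ℝ (fun z => f (h z))) x u v) :=
    second_comp (fun z => f (h z)) g hA hg x u v
  have e2 : fderiv ℝ (fderiv ℝ (fun z => f (h z))) x u v
      = fderiv ℝ (fderiv ℝ f) (h x) (fderiv ℝ h x u) (fderiv ℝ h x v)
        + fderiv ℝ f (h x) (fderiv ℝ (fderiv ℝ h) x u v) :=
    second_comp h f hh hf x u v
  have e3 : fderiv ℝ (fderiv ℝ (fun z => g (h z))) x u v
      = fderiv ℝ (fderiv ℝ g) (h x) (fderiv ℝ h x u) (fderiv ℝ h x v)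
        + fderiv ℝ g (h x) (fderiv ℝ (fderiv ℝ h) x u v) :=
    second_comp h g hh hg x u v
  rw [e1, e3, e2, hAx, hhx, hdA, hdh, hdf, hdg]
  simp
  abel
end

section
/- Let M be a smooth finite-dimensional manifold, x ∈ M, a ∈ ℝ with a ≠ −1, X ∈ T_xM, and let Y₁, Y₂ be smooth vector fields on M with Y₁(x) = Y₂(x). Viewing Y₁, Y₂ as smooth sections M → TM, one has, inside the tangent space T_{Y₁(x)}(TM): dY₁(x)(X) + dY₂(x)(a·X) = dY(x)((1+a)·X), where Y is the smooth vector field Y = (1/(1+a))·Y₁ + (a/(1+a))·Y₂. -/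
/-!
The chart of the total space over the trivialization at `x` sends `⟨z, w⟩` to
`(chart z, φ_z w)` with `φ_z` linear. Hence for `b + c = 1` the chart representative of
`b • s + c • t` is the same affine combination of the representatives of `s` and `t`, and so is
its derivative. With `b = 1/(1+a)`, `c = a/(1+a)` and linearity of `dY₁(x)`, `dY₂(x)` this gives
`dY((1+a)X) = dY₁(X) + a dY₂(X) = dY₁(X) + dY₂(aX)`.
-/

open scoped Manifold
open Bundle Topology

section
variable {𝕜 : Type*} [NontriviallyNormedField 𝕜]
  {E : Type*} [NormedAddCommGroup E] [NormedSpace 𝕜 E] {H : Type*} [TopologicalSpace H]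
  {I : ModelWithCorners 𝕜 E H} {M : Type*} [TopologicalSpace M] [ChartedSpace H M]
  {F : Type*} [NormedAddCommGroup F] [NormedSpace 𝕜 F] {V : M → Type*}
  [TopologicalSpace (TotalSpace F V)] [∀ z, TopologicalSpace (V z)] [FiberBundle F V]

theorem extChartAt_totalSpace_apply {x z : M} (p : V x) (w : V z)
    (hz : z ∈ (trivializationAt F V x).baseSet) :
    extChartAt (I.prod 𝓘(𝕜, F)) (⟨x, p⟩ : TotalSpace F V) ⟨z, w⟩
      = (extChartAt I x z, (trivializationAt F V x ⟨z, w⟩).2) := by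
  rw [FiberBundle.extChartAt]
  simp [(trivializationAt F V x).coe_fst' (x := ⟨z, w⟩) hz]

variable [∀ z, AddCommGroup (V z)] [∀ z, Module 𝕜 (V z)] [VectorBundle 𝕜 F V]

theorem writtenInExtChartAt_affineCombination_section {b c : 𝕜} (hbc : b + c = 1)
    (s t : ∀ z, V z) (x : M) :
    writtenInExtChartAt I (I.prod 𝓘(𝕜, F)) x (fun z ↦ (⟨z, b • s z + c • t z⟩ : TotalSpace F V))
      =ᶠ[𝓝 (extChartAt I x x)]
      b • writtenInExtChartAt I (I.prod 𝓘(𝕜, F)) x (fun z ↦ (⟨z, s z⟩ : TotalSpace F V))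
        + c • writtenInExtChartAt I (I.prod 𝓘(𝕜, F)) x (fun z ↦ (⟨z, t z⟩ : TotalSpace F V)) := by
  filter_upwards [extChartAt_preimage_mem_nhds ((trivializationAt F V x).open_baseSet.mem_nhds
    (FiberBundle.mem_baseSet_trivializationAt' x))] with u hz
  have hlin := (trivializationAt F V x).linear 𝕜 hz
  simp only [writtenInExtChartAt, Function.comp_apply, Pi.add_apply, Pi.smul_apply]
  rw [extChartAt_totalSpace_apply _ _ hz, extChartAt_totalSpace_apply _ _ hz,
    extChartAt_totalSpace_apply _ _ hz, hlin.map_add, hlin.map_smul, hlin.map_smul,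
    Prod.smul_mk, Prod.smul_mk, Prod.mk_add_mk, ← add_smul, hbc, one_smul]

theorem hasMFDerivAt_affineCombination_section {b c : 𝕜} (hbc : b + c = 1) {s t : ∀ z, V z}
    {x : M} (hs : MDifferentiableAt I (I.prod 𝓘(𝕜, F)) (fun z ↦ (⟨z, s z⟩ : TotalSpace F V)) x)
    (ht : MDifferentiableAt I (I.prod 𝓘(𝕜, F)) (fun z ↦ (⟨z, t z⟩ : TotalSpace F V)) x) :
    HasMFDerivAt I (I.prod 𝓘(𝕜, F)) (fun z ↦ (⟨z, b • s z + c • t z⟩ : TotalSpace F V)) x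
      (b • @id (E →L[𝕜] E × F) (mfderiv I (I.prod 𝓘(𝕜, F)) (fun z ↦ (⟨z, s z⟩ : TotalSpace F V)) x)
        + c • @id (E →L[𝕜] E × F)
          (mfderiv I (I.prod 𝓘(𝕜, F)) (fun z ↦ (⟨z, t z⟩ : TotalSpace F V)) x)) := by
  have hchart := writtenInExtChartAt_affineCombination_section (I := I) (F := F) hbc s t x
  refine ⟨(mdifferentiableAt_add_section (mdifferentiableAt_const.smul_section hs)
    (mdifferentiableAt_const.smul_section ht)).continuousAt, ?_⟩
  exact ((hs.hasMFDerivAt.2.const_smul b).add (ht.hasMFDerivAt.2.const_smul c))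
    |>.congr_of_eventuallyEq (nhdsWithin_le_nhds hchart) hchart.self_of_nhds

theorem mfderiv_affineCombination_section_apply {b c : 𝕜} (hbc : b + c = 1) {s t : ∀ z, V z}
    {x : M} (hs : MDifferentiableAt I (I.prod 𝓘(𝕜, F)) (fun z ↦ (⟨z, s z⟩ : TotalSpace F V)) x)
    (ht : MDifferentiableAt I (I.prod 𝓘(𝕜, F)) (fun z ↦ (⟨z, t z⟩ : TotalSpace F V)) x)
    (v : TangentSpace I x) :
    @id (E × F) (mfderiv I (I.prod 𝓘(𝕜, F))
        (fun z ↦ (⟨z, b • s z + c • t z⟩ : TotalSpace F V)) x v)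
      = b • @id (E × F) (mfderiv I (I.prod 𝓘(𝕜, F)) (fun z ↦ (⟨z, s z⟩ : TotalSpace F V)) x v)
        + c • @id (E × F)
          (mfderiv I (I.prod 𝓘(𝕜, F)) (fun z ↦ (⟨z, t z⟩ : TotalSpace F V)) x v) := by
  rw [(hasMFDerivAt_affineCombination_section hbc hs ht).mfderiv]
  rfl

end

theorem statement16_general
    {E : Type*} [NormedAddCommGroup E] [NormedSpace ℝ E]
    {H : Type*} [TopologicalSpace H] {I : ModelWithCorners ℝ E H}
    {M : Type*} [TopologicalSpace M] [ChartedSpace H M] [IsManifold I (⊤ : ℕ∞) M]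
    (x : M) (a : ℝ) (ha : a ≠ -1) (X : TangentSpace I x)
    (Y₁ Y₂ : ∀ z : M, TangentSpace I z)
    (hY₁ : ContMDiff I I.tangent (⊤ : ℕ∞) (fun z => (⟨z, Y₁ z⟩ : TangentBundle I M)))
    (hY₂ : ContMDiff I I.tangent (⊤ : ℕ∞) (fun z => (⟨z, Y₂ z⟩ : TangentBundle I M))) :
    @id (E × E) (mfderiv I I.tangent (fun z => (⟨z, Y₁ z⟩ : TangentBundle I M)) x X)
      + @id (E × E) (mfderiv I I.tangent (fun z => (⟨z, Y₂ z⟩ : TangentBundle I M)) x (a • X))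
    = @id (E × E) (mfderiv I I.tangent
        (fun z => (⟨z, (1/(1+a)) • Y₁ z + (a/(1+a)) • Y₂ z⟩ : TangentBundle I M)) x
        ((1+a) • X)) := by
  have h1a : 1 + a ≠ 0 := fun h ↦ ha (by linarith)
  have hbc : 1 / (1 + a) + a / (1 + a) = 1 := by field_simp
  rw [mfderiv_affineCombination_section_apply hbc (hY₁.mdifferentiableAt (by simp))
    (hY₂.mdifferentiableAt (by simp)), map_smul, map_smul, map_smul]
  set A : E →L[ℝ] E × E := mfderiv I I.tangent (fun z => (⟨z, Y₁ z⟩ : TangentBundle I M)) x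
  set B : E →L[ℝ] E × E := mfderiv I I.tangent (fun z => (⟨z, Y₂ z⟩ : TangentBundle I M)) x
  -- the tangent spaces are `E × E` only up to defeq; restate so that one `SMul` instance is used
  show A X + a • B X = (1 / (1 + a)) • (1 + a) • A X + (a / (1 + a)) • (1 + a) • B X
  rw [smul_smul, smul_smul, one_div_mul_cancel h1a, div_mul_cancel₀ _ h1a, one_smul]

/-- (The additivity step in the proof of Lemma 1.1.) Let `M` be a smooth
finite-dimensional manifold, `x ∈ M`, `a ∈ ℝ` with `a ≠ -1`, `X ∈ T_xM`, and `Y₁, Y₂`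
smooth vector fields on `M` with `Y₁ x = Y₂ x`. Viewing `Y₁, Y₂` as smooth sections
`M → TM`, one has, inside `T_{Y₁ x}(TM)` (which, for the three total-space points
`⟨x, Y₁ x⟩ = ⟨x, Y₂ x⟩ = ⟨x, Y x⟩` involved, is definitionally the space `E × E`):
`dY₁(x)(X) + dY₂(x)(a·X) = dY(x)((1+a)·X)` where `Y = (1/(1+a))·Y₁ + (a/(1+a))·Y₂`. -/
theorem statement16
    {E : Type*} [NormedAddCommGroup E] [NormedSpace ℝ E] [FiniteDimensional ℝ E]
    {H : Type*} [TopologicalSpace H] {I : ModelWithCorners ℝ E H} [I.Boundaryless]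
    {M : Type*} [TopologicalSpace M] [ChartedSpace H M] [IsManifold I (⊤ : ℕ∞) M]
    [T2Space M]
    (x : M) (a : ℝ) (ha : a ≠ -1) (X : TangentSpace I x)
    (Y₁ Y₂ : ∀ z : M, TangentSpace I z)
    (hY₁ : ContMDiff I I.tangent (⊤ : ℕ∞) (fun z => (⟨z, Y₁ z⟩ : TangentBundle I M)))
    (hY₂ : ContMDiff I I.tangent (⊤ : ℕ∞) (fun z => (⟨z, Y₂ z⟩ : TangentBundle I M)))
    (hx : Y₁ x = Y₂ x) :
    @id (E × E) (mfderiv I I.tangent (fun z => (⟨z, Y₁ z⟩ : TangentBundle I M)) x X)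
      + @id (E × E) (mfderiv I I.tangent (fun z => (⟨z, Y₂ z⟩ : TangentBundle I M)) x (a • X))
    = @id (E × E) (mfderiv I I.tangent
        (fun z => (⟨z, (1/(1+a)) • Y₁ z + (a/(1+a)) • Y₂ z⟩ : TangentBundle I M)) x
        ((1+a) • X)) :=
  statement16_general x a ha X Y₁ Y₂ hY₁ hY₂
end
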